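/- arXiv:1901.08641 — 2 statements merged into one kernel-verified Lean document; each statement's English description precedes it below -/
import Mathlib

section
/- Let $\eta$ and $P_0$ be probability measures on a product space, $\xi = \{C \in \beta : \eta(C)>0\}$ for a finite partition $\beta$ with $\eta \prec_\beta P_0$, and $g:\Omega\to\mathbb{R}$ bounded measurable. Suppose that for each $C\in\xi$ and all $\omega,\omega'\in C$, $g(\omega') \leq g(\omega) + R$ for a constant $R\geq 0$. Then $\int g\,d\eta - KL(\eta : P_0 \mid \beta) \leq \log\int \exp(g)\,dP_0 + R$. -/
/-!
On each cell `C` of positive `η`-mass let `m_C = inf_C g`; the oscillation bound gives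
`∫ g dη ≤ ∑ η(C) m_C + R`, while `∑ P₀(C) exp m_C ≤ ∫ exp g dP₀`. The two are linked by the
finite Gibbs variational inequality `∑ p_C (m_C - log (p_C / q_C)) ≤ log ∑ q_C exp m_C`,
which is `log x ≤ x - 1` applied cellwise to `x = q_C exp m_C / (p_C ∑ q exp m)`.
-/

open MeasureTheory Real Function

section Gibbs

variable {ι : Type*} [Fintype ι] {p q : ι → ℝ}

theorem Real.sum_mul_exp_pos (m : ι → ℝ) (hp1 : ∑ i, p i = 1) (hq : ∀ i, 0 ≤ q i)
    (hpq : ∀ i, q i = 0 → p i = 0) : 0 < ∑ i, q i * exp (m i) := by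
  obtain ⟨i, -, hpi⟩ := Finset.exists_ne_zero_of_sum_ne_zero (hp1.trans_ne one_ne_zero)
  have hqi : 0 < q i := (hq i).lt_of_ne' fun h => hpi (hpq i h)
  exact Finset.sum_pos' (fun j _ => mul_nonneg (hq j) (exp_pos _).le)
    ⟨i, Finset.mem_univ i, mul_pos hqi (exp_pos _)⟩

theorem Real.mul_sub_log_div_sub_log_le {p q m S : ℝ} (hp : 0 ≤ p) (hq : 0 ≤ q)
    (hpq : q = 0 → p = 0) (hS : 0 < S) :
    p * (m - log (p / q) - log S) ≤ q * exp m / S - p := by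
  rcases hp.eq_or_lt with rfl | hp
  · simp only [zero_mul, sub_zero]
    positivity
  have hq : 0 < q := hq.lt_of_ne' fun h => hp.ne' (hpq h)
  have hlog := log_le_sub_one_of_pos (show 0 < q * exp m / (p * S) by positivity)
  rw [log_div (by positivity) (by positivity), log_mul hq.ne' (exp_pos m).ne', log_exp,
    log_mul hp.ne' hS.ne'] at hlog
  calc p * (m - log (p / q) - log S)
      = p * (log q + m - (log p + log S)) := by rw [log_div hp.ne' hq.ne']; ring
    _ ≤ p * (q * exp m / (p * S) - 1) := mul_le_mul_of_nonneg_left hlog hp.le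
    _ = q * exp m / S - p := by field_simp

theorem Real.sum_mul_sub_sum_mul_log_div_le_log_sum_mul_exp (m : ι → ℝ) (hp : ∀ i, 0 ≤ p i)
    (hp1 : ∑ i, p i = 1) (hq : ∀ i, 0 ≤ q i) (hpq : ∀ i, q i = 0 → p i = 0) :
    ∑ i, p i * m i - ∑ i, p i * log (p i / q i) ≤ log (∑ i, q i * exp (m i)) := by
  set S := ∑ i, q i * exp (m i)
  have hS : 0 < S := sum_mul_exp_pos m hp1 hq hpq
  have hsum : ∑ i, p i * (m i - log (p i / q i) - log S) ≤ ∑ i, (q i * exp (m i) / S - p i) :=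
    Finset.sum_le_sum fun i _ => mul_sub_log_div_sub_log_le (hp i) (hq i) (hpq i) hS
  rw [Finset.sum_sub_distrib, ← Finset.sum_div, hp1, div_self hS.ne'] at hsum
  simp only [mul_sub, Finset.sum_sub_distrib, ← Finset.sum_mul, hp1, one_mul] at hsum
  linarith

end Gibbs

theorem le_csInf_image_add {α : Type*} {s : Set α} {g : α → ℝ} {R : ℝ} (hs : s.Nonempty)
    (hosc : ∀ ω ∈ s, ∀ ω' ∈ s, g ω' ≤ g ω + R) : ∀ ω' ∈ s, g ω' ≤ sInf (g '' s) + R := by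
  intro ω' hω'
  have : g ω' - R ≤ sInf (g '' s) := by
    refine le_csInf (hs.image g) ?_
    rintro _ ⟨ω, hω, rfl⟩
    linarith [hosc ω hω ω' hω']
  linarith

section Partition

variable {Ω ι : Type*} [MeasurableSpace Ω] [Fintype ι] {μ : Measure Ω} {C : ι → Set Ω}

theorem integral_eq_sum_setIntegral_of_partition {E : Type*} [NormedAddCommGroup E]
    [NormedSpace ℝ E] (hCm : ∀ i, MeasurableSet (C i)) (hCd : Pairwise (Disjoint on C))
    (hCu : ⋃ i, C i = Set.univ) {f : Ω → E} (hf : Integrable f μ) :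
    ∫ ω, f ω ∂μ = ∑ i, ∫ ω in C i, f ω ∂μ := by
  rw [← setIntegral_univ, ← hCu, integral_iUnion_fintype hCm hCd fun _ => hf.integrableOn]

theorem sum_measureReal_eq_one_of_partition [IsProbabilityMeasure μ] (hCm : ∀ i, MeasurableSet (C i))
    (hCd : Pairwise (Disjoint on C)) (hCu : ⋃ i, C i = Set.univ) :
    ∑ i, μ.real (C i) = 1 := by
  rw [← measureReal_iUnion_fintype hCd hCm, hCu, probReal_univ]

theorem integral_le_sum_measureReal_mul_of_partition [IsFiniteMeasure μ]
    (hCm : ∀ i, MeasurableSet (C i)) (hCd : Pairwise (Disjoint on C))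
    (hCu : ⋃ i, C i = Set.univ) {f : Ω → ℝ} (hf : Integrable f μ) {c : ι → ℝ}
    (hfc : ∀ i, μ (C i) ≠ 0 → ∀ ω ∈ C i, f ω ≤ c i) :
    ∫ ω, f ω ∂μ ≤ ∑ i, μ.real (C i) * c i := by
  rw [integral_eq_sum_setIntegral_of_partition hCm hCd hCu hf]
  refine Finset.sum_le_sum fun i _ => ?_
  by_cases hi : μ (C i) = 0
  · simp [Measure.restrict_eq_zero.mpr hi, measureReal_def, hi]
  calc ∫ ω in C i, f ω ∂μ ≤ ∫ _ in C i, c i ∂μ :=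
        setIntegral_mono_on hf.integrableOn (integrableOn_const (measure_ne_top μ _)) (hCm i)
          (hfc i hi)
    _ = μ.real (C i) * c i := by rw [setIntegral_const, smul_eq_mul]

theorem sum_measureReal_mul_le_integral_of_partition [IsFiniteMeasure μ]
    (hCm : ∀ i, MeasurableSet (C i)) (hCd : Pairwise (Disjoint on C))
    (hCu : ⋃ i, C i = Set.univ) {f : Ω → ℝ} (hf : Integrable f μ) {c : ι → ℝ}
    (hcf : ∀ i, ∀ ω ∈ C i, c i ≤ f ω) :
    ∑ i, μ.real (C i) * c i ≤ ∫ ω, f ω ∂μ := by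
  rw [integral_eq_sum_setIntegral_of_partition hCm hCd hCu hf]
  refine Finset.sum_le_sum fun i _ => ?_
  rw [mul_comm]
  exact setIntegral_ge_of_const_le_real (hCm i) (measure_ne_top μ _) (hcf i) hf.integrableOn

end Partition

theorem donsker_varadhan_lower_bound_general {Ω : Type*} [MeasurableSpace Ω]
    (η P₀ : Measure Ω) [IsProbabilityMeasure η] [IsProbabilityMeasure P₀]
    {ι : Type*} [Fintype ι] (C : ι → Set Ω)
    (hCm : ∀ i, MeasurableSet (C i))
    (hCd : Pairwise (Function.onFun Disjoint C))
    (hCu : (⋃ i, C i) = Set.univ)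
    (hprec : ∀ i, P₀ (C i) = 0 → η (C i) = 0)
    (g : Ω → ℝ) (hg : Measurable g) (B : ℝ) (hgb : ∀ ω, |g ω| ≤ B)
    (R : ℝ)
    (hosc : ∀ i, η (C i) ≠ 0 → ∀ ω ∈ C i, ∀ ω' ∈ C i, g ω' ≤ g ω + R) :
    (∫ ω, g ω ∂η) -
        (∑ i, (η (C i)).toReal *
          Real.log ((η (C i)).toReal / (P₀ (C i)).toReal)) ≤
      Real.log (∫ ω, Real.exp (g ω) ∂P₀) + R := by
  have hg_int : Integrable g η := .of_bound hg.aestronglyMeasurable B (ae_of_all _ hgb)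
  have hexp_int : Integrable (fun ω => exp (g ω)) P₀ :=
    .of_bound hg.exp.aestronglyMeasurable (exp B) (ae_of_all _ fun ω => by
      simpa only [norm_eq_abs, abs_exp] using exp_le_exp.2 (abs_le.1 (hgb ω)).2)
  set m : ι → ℝ := fun i => sInf (g '' C i)
  have hm_le : ∀ i, ∀ ω ∈ C i, m i ≤ g ω := fun i ω hω =>
    csInf_le ⟨-B, by rintro _ ⟨ω', -, rfl⟩; exact neg_le_of_abs_le (hgb ω')⟩ ⟨ω, hω, rfl⟩
  have hη1 := sum_measureReal_eq_one_of_partition (μ := η) hCm hCd hCu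
  have hupper : ∫ ω, g ω ∂η ≤ ∑ i, η.real (C i) * m i + R := by
    calc ∫ ω, g ω ∂η ≤ ∑ i, η.real (C i) * (m i + R) :=
          integral_le_sum_measureReal_mul_of_partition hCm hCd hCu hg_int fun i hi =>
            le_csInf_image_add (nonempty_of_measure_ne_zero hi) (hosc i hi)
      _ = ∑ i, η.real (C i) * m i + R := by
          simp only [mul_add, Finset.sum_add_distrib, ← Finset.sum_mul, hη1, one_mul]
  have hlower : ∑ i, P₀.real (C i) * exp (m i) ≤ ∫ ω, exp (g ω) ∂P₀ :=
    sum_measureReal_mul_le_integral_of_partition hCm hCd hCu hexp_int fun i ω hω =>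
      exp_le_exp.2 (hm_le i ω hω)
  have hpq : ∀ i, P₀.real (C i) = 0 → η.real (C i) = 0 := fun i hi => by
    rw [measureReal_eq_zero_iff] at hi ⊢; exact hprec i hi
  have hgibbs := sum_mul_sub_sum_mul_log_div_le_log_sum_mul_exp m (fun i => measureReal_nonneg)
    hη1 (fun i => measureReal_nonneg) hpq
  have hlog := log_le_log (sum_mul_exp_pos m hη1 (fun i => measureReal_nonneg) hpq) hlower
  change _ - ∑ i, η.real (C i) * log (η.real (C i) / P₀.real (C i)) ≤ _
  linarith

/-- Abstract form of Lemma "LBpartition": a Donsker–Varadhan-type lower bound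
with a partition-oscillation error term `R`. -/
theorem donsker_varadhan_lower_bound {Ω : Type*} [MeasurableSpace Ω]
    (η P₀ : Measure Ω) [IsProbabilityMeasure η] [IsProbabilityMeasure P₀]
    {ι : Type*} [Fintype ι] (C : ι → Set Ω)
    (hCm : ∀ i, MeasurableSet (C i))
    (hCd : Pairwise (Function.onFun Disjoint C))
    (hCu : (⋃ i, C i) = Set.univ)
    (hprec : ∀ i, P₀ (C i) = 0 → η (C i) = 0)
    (g : Ω → ℝ) (hg : Measurable g) (B : ℝ) (hgb : ∀ ω, |g ω| ≤ B)
    (R : ℝ) (hR : 0 ≤ R)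
    (hosc : ∀ i, η (C i) ≠ 0 → ∀ ω ∈ C i, ∀ ω' ∈ C i, g ω' ≤ g ω + R) :
    (∫ ω, g ω ∂η) -
        (∑ i, (η (C i)).toReal *
          Real.log ((η (C i)).toReal / (P₀ (C i)).toReal)) ≤
      Real.log (∫ ω, Real.exp (g ω) ∂P₀) + R :=
  donsker_varadhan_lower_bound_general η P₀ C hCm hCd hCu hprec g hg B hgb R hosc
end

section
/- (Donsker–Varadhan upper bound with oscillation error) Let $P_0$ be a probability measure, $\beta$ a finite measurable partition, and $g$ a bounded measurable function whose oscillation within each partition element is at most $R\geq 0$. Let $P$ be the Gibbs posterior $dP = Z^{-1}e^{g}\,dP_0$ with $Z = \int e^g\,dP_0$. Then $\log Z \leq H(P,\beta) + L(P : P_0\mid\beta) + \int g\,dP + R$, where $H(P,\beta) = -\sum_{C\in\beta}P(C)\log P(C)$ and $L(P:P_0\mid\beta) = \sum_{C\in\beta}P(C)\log P_0(C)$. -/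
/-!
The Gibbs posterior `P` is the tilted measure `P₀.tilted g`, so `P(C) · Z = ∫_C e^g dP₀`.
On a cell `C` where `g` oscillates by at most `R`, this integral is at most
`P₀(C) e^{g ω + R}` for every `ω ∈ C`; taking logarithms,
`g ≥ log Z + log P(C) - log P₀(C) - R` on `C`. Integrating over `C` against `P` and summing
over the cells gives the bound, the errors `P(C) · R` adding up to `R`.
-/

open MeasureTheory Real

section

variable {α : Type*} [MeasurableSpace α] {μ : Measure α} {f : α → ℝ} {s : Set α}

lemma measureReal_tilted_apply (hs : MeasurableSet s) :
    (μ.tilted f).real s = (∫ x in s, exp (f x) ∂μ) / ∫ x, exp (f x) ∂μ := by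
  have hnonneg : 0 ≤ ∫ x in s, exp (f x) / ∫ x, exp (f x) ∂μ ∂μ :=
    setIntegral_nonneg hs fun _ _ ↦
      div_nonneg (exp_pos _).le (integral_nonneg fun _ ↦ (exp_pos _).le)
  rw [measureReal_def, tilted_apply_eq_ofReal_integral' f hs, ENNReal.toReal_ofReal hnonneg,
    integral_div]

lemma log_setIntegral_exp_le [IsFiniteMeasure μ] {c : ℝ} (hs : MeasurableSet s)
    (hpos : 0 < ∫ x in s, exp (f x) ∂μ) (hle : ∀ x ∈ s, f x ≤ c) :
    log (∫ x in s, exp (f x) ∂μ) ≤ log (μ.real s) + c := by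
  have hbound : ∫ x in s, exp (f x) ∂μ ≤ μ.real s * exp c := by
    rw [← smul_eq_mul, ← setIntegral_const]
    exact setIntegral_mono_on (Integrable.of_integral_ne_zero hpos.ne') (integrableOn_const)
      hs fun x hx ↦ exp_le_exp.2 (hle x hx)
  have hμs : 0 < μ.real s := pos_of_mul_pos_left (hpos.trans_le hbound) (exp_pos c).le
  calc log (∫ x in s, exp (f x) ∂μ) ≤ log (μ.real s * exp c) := log_le_log hpos hbound
    _ = log (μ.real s) + c := by rw [log_mul hμs.ne' (exp_pos c).ne', log_exp]

lemma log_integral_exp_add_log_measureReal_tilted_le [IsFiniteMeasure μ] {R : ℝ}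
    (hs : MeasurableSet s) (hosc : ∀ x ∈ s, ∀ y ∈ s, |f x - f y| ≤ R)
    (hp : 0 < (μ.tilted f).real s) {x : α} (hx : x ∈ s) :
    log (∫ x, exp (f x) ∂μ) + log ((μ.tilted f).real s) ≤ log (μ.real s) + f x + R := by
  set Z := ∫ x, exp (f x) ∂μ
  set p := (μ.tilted f).real s
  have hpZ : p = (∫ x in s, exp (f x) ∂μ) / Z := measureReal_tilted_apply hs
  obtain ⟨hI, hZ⟩ : 0 < ∫ x in s, exp (f x) ∂μ ∧ 0 < Z := by
    rw [hpZ] at hp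
    exact (div_pos_iff.1 hp).resolve_right fun h ↦
      h.2.not_ge (integral_nonneg fun _ ↦ (exp_pos _).le)
  calc log Z + log p = log (∫ x in s, exp (f x) ∂μ) := by
        rw [← log_mul hZ.ne' hp.ne', hpZ, mul_div_cancel₀ _ hZ.ne']
    _ ≤ log (μ.real s) + (f x + R) := log_setIntegral_exp_le hs hI fun y hy ↦ by
        linarith [(abs_le.1 (hosc y hy x hx)).2]
    _ = log (μ.real s) + f x + R := by ring

lemma measureReal_tilted_mul_log_integral_exp_le [IsFiniteMeasure μ] {R : ℝ}
    (hf : Measurable f) (hs : MeasurableSet s)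
    (hosc : ∀ x ∈ s, ∀ y ∈ s, |f x - f y| ≤ R) :
    (μ.tilted f).real s * log (∫ x, exp (f x) ∂μ) ≤
      -((μ.tilted f).real s * log ((μ.tilted f).real s)) +
        (μ.tilted f).real s * log (μ.real s) + (∫ x in s, f x ∂μ.tilted f) +
        (μ.tilted f).real s * R := by
  rcases measureReal_nonneg.eq_or_lt with hp | hp
  · have hnull : μ.tilted f s = 0 := (measureReal_eq_zero_iff).1 hp.symm
    rw [← hp, Measure.restrict_eq_zero.2 hnull]
    simp
  obtain ⟨y, hy⟩ : s.Nonempty :=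
    nonempty_of_measure_ne_zero (μ := μ.tilted f) fun h ↦ by simp [Measure.real, h] at hp
  have hint : IntegrableOn f s (μ.tilted f) := by
    refine IntegrableOn.of_bound (measure_lt_top _ _) hf.aestronglyMeasurable (|f y| + R)
      ((ae_restrict_iff' hs).2 (ae_of_all _ fun x hx ↦ ?_))
    linarith [abs_sub_abs_le_abs_sub (f x) (f y), hosc x hx y hy, norm_eq_abs (f x)]
  have hlower : ∀ x ∈ s,
      log (∫ x, exp (f x) ∂μ) + log ((μ.tilted f).real s) - log (μ.real s) - R ≤ f x :=
    fun x hx ↦ by linarith [log_integral_exp_add_log_measureReal_tilted_le hs hosc hp hx]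
  linear_combination setIntegral_ge_of_const_le_real hs (measure_ne_top _ _) hlower hint

end

theorem donsker_varadhan_upper_bound_general {Ω : Type*} [MeasurableSpace Ω]
    (P₀ : Measure Ω) [IsProbabilityMeasure P₀]
    {ι : Type*} [Fintype ι] (C : ι → Set Ω)
    (hCm : ∀ i, MeasurableSet (C i))
    (hCd : Pairwise (Function.onFun Disjoint C))
    (hCu : (⋃ i, C i) = Set.univ)
    (g : Ω → ℝ) (hg : Measurable g) (B : ℝ) (hgb : ∀ ω, |g ω| ≤ B)
    (R : ℝ)
    (hosc : ∀ i, ∀ ω ∈ C i, ∀ ω' ∈ C i, |g ω - g ω'| ≤ R)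
    (Z : ℝ) (hZ : Z = ∫ ω, Real.exp (g ω) ∂P₀)
    (P : Measure Ω)
    (hP : P = P₀.withDensity (fun ω => ENNReal.ofReal (Real.exp (g ω) / Z))) :
    Real.log Z ≤
      (-∑ i, (P (C i)).toReal * Real.log (P (C i)).toReal) +
        (∑ i, (P (C i)).toReal * Real.log (P₀ (C i)).toReal) +
        (∫ ω, g ω ∂P) + R := by
  subst hZ
  change P = P₀.tilted g at hP
  subst hP
  have hexp : Integrable (fun ω ↦ exp (g ω)) P₀ :=
    .of_bound hg.exp.aestronglyMeasurable (exp B) (ae_of_all _ fun ω ↦ by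
      simpa using (abs_le.1 (hgb ω)).2)
  have := isProbabilityMeasure_tilted hexp
  have hgP : Integrable g (P₀.tilted g) := .of_bound hg.aestronglyMeasurable B (ae_of_all _ hgb)
  have hsum : ∑ i, (P₀.tilted g).real (C i) = 1 := by
    rw [← measureReal_iUnion_fintype hCd hCm, hCu, probReal_univ]
  have hsplit : ∫ ω, g ω ∂P₀.tilted g = ∑ i, ∫ ω in C i, g ω ∂P₀.tilted g := by
    rw [← integral_iUnion_fintype hCm hCd fun i ↦ hgP.integrableOn, hCu, setIntegral_univ]
  calc log (∫ ω, exp (g ω) ∂P₀)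
      = ∑ i, (P₀.tilted g).real (C i) * log (∫ ω, exp (g ω) ∂P₀) := by
        rw [← Finset.sum_mul, hsum, one_mul]
    _ ≤ ∑ i, (-((P₀.tilted g).real (C i) * log ((P₀.tilted g).real (C i))) +
          (P₀.tilted g).real (C i) * log (P₀.real (C i)) +
          (∫ ω in C i, g ω ∂P₀.tilted g) + (P₀.tilted g).real (C i) * R) :=
        Finset.sum_le_sum fun i _ ↦
          measureReal_tilted_mul_log_integral_exp_le hg (hCm i) (hosc i)
    _ = _ := by
        simp only [Finset.sum_add_distrib, Finset.sum_neg_distrib, ← Finset.sum_mul, hsum,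
          one_mul, hsplit]
        rfl

/-- Abstract form of Lemma "Ghostbusters": a Donsker–Varadhan upper bound with
an oscillation error term for the Gibbs posterior `dP = Z⁻¹ e^g dP₀`. -/
theorem donsker_varadhan_upper_bound {Ω : Type*} [MeasurableSpace Ω]
    (P₀ : Measure Ω) [IsProbabilityMeasure P₀]
    {ι : Type*} [Fintype ι] (C : ι → Set Ω)
    (hCm : ∀ i, MeasurableSet (C i))
    (hCd : Pairwise (Function.onFun Disjoint C))
    (hCu : (⋃ i, C i) = Set.univ)
    (g : Ω → ℝ) (hg : Measurable g) (B : ℝ) (hgb : ∀ ω, |g ω| ≤ B)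
    (R : ℝ) (hR : 0 ≤ R)
    (hosc : ∀ i, ∀ ω ∈ C i, ∀ ω' ∈ C i, |g ω - g ω'| ≤ R)
    (Z : ℝ) (hZ : Z = ∫ ω, Real.exp (g ω) ∂P₀)
    (P : Measure Ω)
    (hP : P = P₀.withDensity (fun ω => ENNReal.ofReal (Real.exp (g ω) / Z))) :
    Real.log Z ≤
      (-∑ i, (P (C i)).toReal * Real.log (P (C i)).toReal) +
        (∑ i, (P (C i)).toReal * Real.log (P₀ (C i)).toReal) +
        (∫ ω, g ω ∂P) + R :=
  donsker_varadhan_upper_bound_general P₀ C hCm hCd hCu g hg B hgb R hosc Z hZ P hP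
end
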